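/- arXiv:1608.03725 — 3 statements merged into one kernel-verified Lean document; each statement's English description precedes it below -/
import Mathlib

section
/- Let < be a weak order of the vector space ℚ^n (a partial order compatible and cancellative with addition and compatible with positive rational scaling, such that incomparability is an equivalence relation). Then the set E of elements incomparable to 0 is a ℚ-linear subspace of ℚ^n, and the relation on ℚ^n/E defined by a + E < b + E iff a < b is a well-defined total order of the vector space ℚ^n/E. -/
/-- For a weak order of the vector space ℚ^n, the set E of elements
incomparable to 0 is a ℚ-linear subspace, and the induced relation on ℚ^n/E
(a + E < b + E iff a < b) is a well-defined total order of the vector space ℚ^n/E. -/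
theorem incomparable_subspace_and_quotient_total_order (n : ℕ)
    (r : (Fin n → ℚ) → (Fin n → ℚ) → Prop)
    (hirr : ∀ a, ¬ r a a) (htrans : ∀ a b c, r a b → r b c → r a c)
    (hweak : ∀ a b c, (¬ r a b ∧ ¬ r b a) → (¬ r b c ∧ ¬ r c b) → ¬ r a c ∧ ¬ r c a)
    (hcompat : ∀ a b c, r a b → r (a + c) (b + c))
    (hcancel : ∀ a b c, r (a + c) (b + c) → r a b)
    (hscale : ∀ (l : ℚ) (a b), 0 < l → r a b → r (l • a) (l • b)) :
    ∃ E : Submodule ℚ (Fin n → ℚ),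
      (E : Set (Fin n → ℚ)) = {a | ¬ r a 0 ∧ ¬ r 0 a} ∧
      -- the induced relation on ℚ^n/E is well defined
      (∀ a a' b b', a - a' ∈ E → b - b' ∈ E → (r a b ↔ r a' b')) ∧
      -- and it is a total order on ℚ^n/E
      (∀ a b, a - b ∈ E ∨ r a b ∨ r b a) := by
  set S : Set (Fin n → ℚ) := {a | ¬ r a 0 ∧ ¬ r 0 a} with hS
  have shift : ∀ a b c, r a b ↔ r (a + c) (b + c) :=
    fun a b c => ⟨hcompat a b c, hcancel a b c⟩
  -- incomparability with 0 of differences characterizes incomparability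
  have incomp : ∀ x y, x - y ∈ S ↔ (¬ r x y ∧ ¬ r y x) := by
    intro x y
    have h1 : r (x - y) 0 ↔ r x y := by
      have := shift (x - y) 0 y
      simpa using this
    have h2 : r 0 (x - y) ↔ r y x := by
      have := shift 0 (x - y) y
      simpa using this
    simp only [hS, Set.mem_setOf_eq, h1, h2]
  have negS : ∀ a, a ∈ S → -a ∈ S := by
    intro a ha
    have h1 : r (-a) 0 ↔ r 0 a := by
      have := shift (-a) 0 a; simpa using this
    have h2 : r 0 (-a) ↔ r a 0 := by
      have := shift 0 (-a) a; simpa using this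
    exact ⟨fun h => ha.2 (h1.mp h), fun h => ha.1 (h2.mp h)⟩
  have addS : ∀ a b, a ∈ S → b ∈ S → a + b ∈ S := by
    intro a b ha hb
    have hnb := negS b hb
    have hinc := hweak a 0 (-b) ⟨ha.1, ha.2⟩ ⟨hnb.2, hnb.1⟩
    constructor
    · intro h
      have : r a (-b) := by
        apply hcancel a (-b) b
        simpa using h
      exact hinc.1 this
    · intro h
      have : r (-b) a := by
        apply hcancel (-b) a b
        simpa using h
      exact hinc.2 this
  have posS : ∀ (c : ℚ) a, 0 < c → a ∈ S → c • a ∈ S := by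
    intro c a hc ha
    constructor
    · intro h
      have := hscale c⁻¹ (c • a) 0 (by positivity) h
      rw [smul_smul, inv_mul_cancel₀ (ne_of_gt hc)] at this
      simp at this
      exact ha.1 this
    · intro h
      have := hscale c⁻¹ 0 (c • a) (by positivity) h
      rw [smul_smul, inv_mul_cancel₀ (ne_of_gt hc)] at this
      simp at this
      exact ha.2 this
  have smulS : ∀ (c : ℚ) a, a ∈ S → c • a ∈ S := by
    intro c a ha
    rcases lt_trichotomy c 0 with h | h | h
    · have : c • a = (-c) • (-a) := by simp
      rw [this]
      exact posS (-c) (-a) (by linarith) (negS a ha)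
    · rw [h, zero_smul]
      exact ⟨hirr 0, hirr 0⟩
    · exact posS c a h ha
  -- r is invariant under replacing arguments by incomparable elements
  have pushR : ∀ x y z, r x y → (¬ r y z ∧ ¬ r z y) → r x z := by
    intro x y z hxy hyz
    by_contra hxz
    rcases Classical.em (r z x) with h | h
    · exact hyz.2 (htrans z x y h hxy)
    · exact (hweak y z x ⟨hyz.1, hyz.2⟩ ⟨h, hxz⟩).2 hxy
  have pushL : ∀ x y x', r x y → (¬ r x x' ∧ ¬ r x' x) → r x' y := by
    intro x y x' hxy hxx
    by_contra hx'y
    rcases Classical.em (r y x') with h | h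
    · exact hxx.1 (htrans x y x' hxy h)
    · exact (hweak x x' y ⟨hxx.1, hxx.2⟩ ⟨hx'y, h⟩).1 hxy
  refine ⟨{ carrier := S,
            add_mem' := fun {a b} ha hb => addS a b ha hb,
            zero_mem' := ⟨hirr 0, hirr 0⟩,
            smul_mem' := fun c a ha => smulS c a ha }, rfl, ?_, ?_⟩
  · intro a a' b b' ha hb
    have ha' : ¬ r a a' ∧ ¬ r a' a := (incomp a a').mp ha
    have hb' : ¬ r b b' ∧ ¬ r b' b := (incomp b b').mp hb
    constructor
    · intro h
      exact pushL a b' a' (pushR a b b' h hb') ha'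
    · intro h
      exact pushL a' b a (pushR a' b' b h ⟨hb'.2, hb'.1⟩) ⟨ha'.2, ha'.1⟩
  · intro a b
    rcases Classical.em (r a b) with h | h
    · exact Or.inr (Or.inl h)
    · rcases Classical.em (r b a) with h2 | h2
      · exact Or.inr (Or.inr h2)
      · exact Or.inl ((incomp a b).mpr ⟨h, h2⟩)
end

section
/- Let < be a monomial preorder on k[x_1,...,x_n]. For any polynomials f, g ∈ k[x_1,...,x_n] over a field k, the leading part is multiplicative: L_<(fg) = L_<(f) L_<(g). -/
open MvPolynomial

structure MonomialPreorder (n : ℕ) where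
  lt : (Fin n →₀ ℕ) → (Fin n →₀ ℕ) → Prop
  irrefl : ∀ a, ¬ lt a a
  trans : ∀ {a b c}, lt a b → lt b c → lt a c
  weak : ∀ {a b c}, (¬ lt a b ∧ ¬ lt b a) → (¬ lt b c ∧ ¬ lt c b) → ¬ lt a c ∧ ¬ lt c a
  compat : ∀ {a b} (c), lt a b → lt (a + c) (b + c)
  cancel : ∀ {a b} (c), lt (a + c) (b + c) → lt a b

variable {n : ℕ} {k : Type*} [Field k]

open Classical in
noncomputable def leadingPart (P : MonomialPreorder n) (f : MvPolynomial (Fin n) k) :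
    MvPolynomial (Fin n) k :=
  ∑ a ∈ f.support.filter (fun a => ∀ b ∈ f.support, ¬ P.lt a b),
    monomial a (coeff a f)

namespace MonomialPreorder

variable {P : MonomialPreorder n}

lemma lt_of_lt_of_incomp {a b c : Fin n →₀ ℕ} (h : P.lt a b) (h1 : ¬ P.lt b c)
    (h2 : ¬ P.lt c b) : P.lt a c := by
  by_contra hac
  have hca : ¬ P.lt c a := fun h' => h2 (P.trans h' h)
  exact (P.weak ⟨hac, hca⟩ ⟨h2, h1⟩).1 h

lemma lt_of_incomp_of_lt {a b c : Fin n →₀ ℕ} (h1 : ¬ P.lt a b) (h2 : ¬ P.lt b a)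
    (h : P.lt b c) : P.lt a c := by
  by_contra hac
  have hca : ¬ P.lt c a := fun h' => h2 (P.trans h h')
  exact (P.weak ⟨h2, h1⟩ ⟨hac, hca⟩).1 h

lemma compat_left {a b : Fin n →₀ ℕ} (c : Fin n →₀ ℕ) (h : P.lt a b) :
    P.lt (c + a) (c + b) := by
  rw [add_comm c a, add_comm c b]; exact P.compat c h

lemma cancel_left {a b : Fin n →₀ ℕ} (c : Fin n →₀ ℕ) (h : P.lt (c + a) (c + b)) :
    P.lt a b := by
  rw [add_comm c a, add_comm c b] at h; exact P.cancel c h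

lemma add_le {α a β b : Fin n →₀ ℕ} (h1 : ¬ P.lt α a) (h2 : ¬ P.lt β b) :
    ¬ P.lt (α + β) (a + b) := by
  intro h
  by_cases haα : P.lt a α
  · have h4 : P.lt (α + β) (α + b) := P.trans h (P.compat b haα)
    exact h2 (cancel_left α h4)
  · have hi1 : ¬ P.lt (a + b) (α + b) := fun h' => haα (P.cancel b h')
    have hi2 : ¬ P.lt (α + b) (a + b) := fun h' => h1 (P.cancel b h')
    exact h2 (cancel_left α (lt_of_lt_of_incomp h hi1 hi2))

lemma incomp_add {a α b β : Fin n →₀ ℕ} (ha : ¬ P.lt a α ∧ ¬ P.lt α a)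
    (hb : ¬ P.lt b β ∧ ¬ P.lt β b) :
    ¬ P.lt (a + b) (α + β) ∧ ¬ P.lt (α + β) (a + b) :=
  ⟨add_le ha.1 hb.1, add_le ha.2 hb.2⟩

lemma add_lt_of_le_of_lt {α a β b : Fin n →₀ ℕ} (h1 : ¬ P.lt α a) (h2 : P.lt b β) :
    P.lt (a + b) (α + β) := by
  have s1 : P.lt (a + b) (a + β) := compat_left a h2
  by_cases h : P.lt a α
  · exact P.trans s1 (P.compat β h)
  · have hi1 : ¬ P.lt (a + β) (α + β) := fun h' => h (P.cancel β h')
    have hi2 : ¬ P.lt (α + β) (a + β) := fun h' => h1 (P.cancel β h')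
    exact lt_of_lt_of_incomp s1 hi1 hi2

lemma add_lt_of_lt_of_le {α a β b : Fin n →₀ ℕ} (h1 : P.lt a α) (h2 : ¬ P.lt β b) :
    P.lt (a + b) (α + β) := by
  rw [add_comm a b, add_comm α β]
  exact add_lt_of_le_of_lt h2 h1

lemma exists_maximal (P : MonomialPreorder n) :
    ∀ s : Finset (Fin n →₀ ℕ), s.Nonempty → ∃ a ∈ s, ∀ b ∈ s, ¬ P.lt a b := by
  intro s
  induction s using Finset.induction_on with
  | empty => intro h; simp at h
  | insert x s hx ih =>
    intro _
    rcases s.eq_empty_or_nonempty with rfl | hne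
    · refine ⟨x, Finset.mem_insert_self _ _, ?_⟩
      intro b hb
      rcases Finset.mem_insert.mp hb with rfl | hb
      · exact P.irrefl _
      · simp at hb
    · obtain ⟨m, hm, hmax⟩ := ih hne
      by_cases hlt : P.lt m x
      · refine ⟨x, Finset.mem_insert_self _ _, ?_⟩
        intro b hb
        rcases Finset.mem_insert.mp hb with rfl | hb
        · exact P.irrefl _
        · exact fun h => hmax b hb (P.trans hlt h)
      · refine ⟨m, Finset.mem_insert_of_mem hm, ?_⟩
        intro b hb
        rcases Finset.mem_insert.mp hb with rfl | hb
        · exact hlt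
        · exact hmax b hb

end MonomialPreorder

open MonomialPreorder

open Classical in
lemma coeff_leadingPart (P : MonomialPreorder n) (f : MvPolynomial (Fin n) k)
    (c : Fin n →₀ ℕ) :
    coeff c (leadingPart P f) =
      if c ∈ f.support.filter (fun a => ∀ b ∈ f.support, ¬ P.lt a b) then coeff c f else 0 := by
  classical
  rw [leadingPart, MvPolynomial.coeff_sum]
  simp only [coeff_monomial]
  rw [Finset.sum_ite_eq' _ c (fun a => coeff a f)]

/-- For a monomial preorder, the leading part is multiplicative:
L_<(fg) = L_<(f) L_<(g). -/
theorem leadingPart_mul (n : ℕ) (k : Type*) [Field k] (P : MonomialPreorder n)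
    (f g : MvPolynomial (Fin n) k) :
    leadingPart P (f * g) = leadingPart P f * leadingPart P g := by
  classical
  by_cases hf : f = 0
  · simp [hf, leadingPart]
  by_cases hg : g = 0
  · simp [hg, leadingPart]
  obtain ⟨α, hαs, hαmax⟩ := P.exists_maximal f.support (support_nonempty.mpr hf)
  obtain ⟨β, hβs, hβmax⟩ := P.exists_maximal g.support (support_nonempty.mpr hg)
  set Mf := f.support.filter (fun a => ∀ b ∈ f.support, ¬ P.lt a b) with hMf
  set Mg := g.support.filter (fun a => ∀ b ∈ g.support, ¬ P.lt a b) with hMg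
  set Lf := leadingPart P f with hLf
  set Lg := leadingPart P g with hLg
  have hαMf : α ∈ Mf := Finset.mem_filter.mpr ⟨hαs, hαmax⟩
  have hβMg : β ∈ Mg := Finset.mem_filter.mpr ⟨hβs, hβmax⟩
  -- elements of Mf are incomparable with α
  have hincf : ∀ a ∈ Mf, ¬ P.lt a α ∧ ¬ P.lt α a := fun a ha =>
    ⟨(Finset.mem_filter.mp ha).2 α hαs, hαmax a (Finset.mem_filter.mp ha).1⟩
  have hincg : ∀ b ∈ Mg, ¬ P.lt b β ∧ ¬ P.lt β b := fun b hb =>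
    ⟨(Finset.mem_filter.mp hb).2 β hβs, hβmax b (Finset.mem_filter.mp hb).1⟩
  -- support of Lf equals Mf
  have suppLf : Lf.support = Mf := by
    ext a
    rw [mem_support_iff, hLf, coeff_leadingPart, ← hMf]
    constructor
    · intro h
      by_contra hmem
      rw [if_neg hmem] at h
      exact h rfl
    · intro h
      rw [if_pos h]
      exact mem_support_iff.mp (Finset.mem_filter.mp h).1
  have suppLg : Lg.support = Mg := by
    ext a
    rw [mem_support_iff, hLg, coeff_leadingPart, ← hMg]
    constructor
    · intro h
      by_contra hmem
      rw [if_neg hmem] at h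
      exact h rfl
    · intro h
      rw [if_pos h]
      exact mem_support_iff.mp (Finset.mem_filter.mp h).1
  -- non-maximal support elements lie strictly below α, β
  have toTopf : ∀ a ∈ f.support, a ∉ Mf → P.lt a α := by
    intro a ha hmem
    rw [hMf, Finset.mem_filter, not_and] at hmem
    push_neg at hmem
    obtain ⟨b', hb', hab'⟩ := hmem ha
    by_cases h : P.lt b' α
    · exact P.trans hab' h
    · exact lt_of_lt_of_incomp hab' h (hαmax b' hb')
  have toTopg : ∀ b ∈ g.support, b ∉ Mg → P.lt b β := by
    intro b hb hmem
    rw [hMg, Finset.mem_filter, not_and] at hmem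
    push_neg at hmem
    obtain ⟨b', hb', hab'⟩ := hmem hb
    by_cases h : P.lt b' β
    · exact P.trans hab' h
    · exact lt_of_lt_of_incomp hab' h (hβmax b' hb')
  -- key: coefficients of f*g and Lf*Lg agree on the top class
  have keyD : ∀ c : Fin n →₀ ℕ, (¬ P.lt c (α + β) ∧ ¬ P.lt (α + β) c) →
      coeff c (f * g) = coeff c (Lf * Lg) := by
    intro c hc
    rw [coeff_mul, coeff_mul]
    apply Finset.sum_congr rfl
    intro x hx
    rw [Finset.HasAntidiagonal.mem_antidiagonal] at hx
    by_cases ha0 : coeff x.1 f = 0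
    · simp [hLf, coeff_leadingPart, ha0]
    by_cases hb0 : coeff x.2 g = 0
    · simp [hLg, coeff_leadingPart, hb0]
    have has : x.1 ∈ f.support := mem_support_iff.mpr ha0
    have hbs : x.2 ∈ g.support := mem_support_iff.mpr hb0
    by_cases hamem : x.1 ∈ Mf
    · by_cases hbmem : x.2 ∈ Mg
      · rw [hLf, hLg, coeff_leadingPart, coeff_leadingPart, ← hMf, ← hMg,
          if_pos hamem, if_pos hbmem]
      · exact absurd (hx ▸ add_lt_of_le_of_lt (hαmax x.1 has) (toTopg x.2 hbs hbmem)) hc.1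
    · exact absurd (hx ▸ add_lt_of_lt_of_le (toTopf x.1 has hamem) (hβmax x.2 hbs)) hc.1
  -- the support of Lf * Lg lies in the top class
  have suppC : ∀ d ∈ (Lf * Lg).support, ¬ P.lt d (α + β) ∧ ¬ P.lt (α + β) d := by
    intro d hd
    have := MvPolynomial.support_mul Lf Lg hd
    rw [Finset.mem_add] at this
    obtain ⟨a, ha, b, hb, rfl⟩ := this
    rw [suppLf] at ha
    rw [suppLg] at hb
    exact incomp_add (hincf a ha) (hincg b hb)
  -- every element of the support of f*g is ≤ the top class
  have supp_fg_le : ∀ d ∈ (f * g).support, ¬ P.lt (α + β) d := by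
    intro d hd
    have := MvPolynomial.support_mul f g hd
    rw [Finset.mem_add] at this
    obtain ⟨a, ha, b, hb, rfl⟩ := this
    exact add_le (hαmax a ha) (hβmax b hb)
  -- Lf * Lg is nonzero
  have hLf0 : Lf ≠ 0 := by
    intro h
    have := suppLf
    rw [h, MvPolynomial.support_zero] at this
    exact absurd (this ▸ hαMf) (Finset.notMem_empty α)
  have hLg0 : Lg ≠ 0 := by
    intro h
    have := suppLg
    rw [h, MvPolynomial.support_zero] at this
    exact absurd (this ▸ hβMg) (Finset.notMem_empty β)
  obtain ⟨c0, hc0⟩ := support_nonempty.mpr (mul_ne_zero hLf0 hLg0)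
  have hc0C := suppC c0 hc0
  have hc0fg : c0 ∈ (f * g).support := by
    rw [mem_support_iff, keyD c0 hc0C]
    exact mem_support_iff.mp hc0
  -- conclude
  ext c
  rw [leadingPart, MvPolynomial.coeff_sum]
  simp only [coeff_monomial]
  rw [Finset.sum_ite_eq' _ c (fun a => coeff a (f * g))]
  by_cases hcC : ¬ P.lt c (α + β) ∧ ¬ P.lt (α + β) c
  · rw [← keyD c hcC]
    by_cases hcs : c ∈ (f * g).support
    · rw [if_pos]
      refine Finset.mem_filter.mpr ⟨hcs, ?_⟩
      intro e he hce
      exact supp_fg_le e he (lt_of_incomp_of_lt hcC.2 hcC.1 hce)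
    · rw [if_neg (fun hmem => hcs (Finset.mem_filter.mp hmem).1),
        MvPolynomial.notMem_support_iff.mp hcs]
  · have h1 : coeff c (Lf * Lg) = 0 := by
      by_contra h
      exact hcC (suppC c (mem_support_iff.mpr h))
    rw [h1, if_neg]
    intro hmem
    obtain ⟨hcs, hcmax⟩ := Finset.mem_filter.mp hmem
    have hlt : P.lt c (α + β) := by
      rcases not_and_or.mp hcC with h | h
      · exact not_not.mp h
      · exact absurd (supp_fg_le c hcs) h
    exact hcmax c0 hc0fg (lt_of_lt_of_incomp hlt hc0C.2 hc0C.1)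
end

section
/- Let w ∈ ℤ^n, I an ideal of k[X], and I^hom ⊆ k[X,t] the homogenization of I with respect to w (generated by f^hom = t^{deg_w f} f(t^{-w_1}x_1,...,t^{-w_n}x_n) for f ∈ I). Then k[X,t]/I^hom is a flat k[t]-module. -/
open MvPolynomial

variable {n : ℕ} {k : Type*} [Field k]

/-- The weighted degree w·a of an exponent vector. -/
def wdot (w : Fin n → ℤ) (a : Fin n →₀ ℕ) : ℤ := ∑ i, w i * (a i : ℤ)

/-- The homogenization of f with respect to the weight w, an element of
k[X, t] = k[x_1,...,x_n,t] realized as MvPolynomial (Option (Fin n)) k with t = X none: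
f^hom = Σ_a c_a t^{deg_w f - w·a} x^a. -/
noncomputable def whomogenize (w : Fin n → ℤ) (f : MvPolynomial (Fin n) k) :
    MvPolynomial (Option (Fin n)) k :=
  ∑ a ∈ f.support,
    monomial (Finsupp.mapDomain Option.some a +
        Finsupp.single (none : Option (Fin n))
          (f.support.sup fun b => (wdot w b - wdot w a).toNat))
      (coeff a f)

/-- The homogenization I^hom of an ideal I with respect to w. -/
noncomputable def homogenizedIdeal (w : Fin n → ℤ) (I : Ideal (MvPolynomial (Fin n) k)) :
    Ideal (MvPolynomial (Option (Fin n)) k) :=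
  Ideal.span (whomogenize w '' (I : Set (MvPolynomial (Fin n) k)))

namespace HomFlatAux

/-- weight on Option (Fin n) : t = none has weight 1 -/
def W (w : Fin n → ℤ) : Option (Fin n) → ℤ := fun j => j.elim 1 w

lemma weight_single_none (w : Fin n → ℤ) (s : ℕ) :
    Finsupp.weight (W w) (Finsupp.single (none : Option (Fin n)) s) = s := by
  rw [Finsupp.weight_apply, Finsupp.sum_single_index (by simp)]
  simp [W]

lemma weight_mapDomain (w : Fin n → ℤ) (a : Fin n →₀ ℕ) :
    Finsupp.weight (W w) (Finsupp.mapDomain Option.some a) = wdot w a := by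
  rw [Finsupp.weight_apply, Finsupp.sum_mapDomain_index_inj (Option.some_injective _)]
  rw [Finsupp.sum_fintype _ _ (by simp)]
  simp only [W, Option.elim, wdot]
  refine Finset.sum_congr rfl fun i _ => ?_
  rw [mul_comm]
  simp [zsmul_eq_mul]

lemma weight_option (w : Fin n → ℤ) (a : Fin n →₀ ℕ) (s : ℕ) :
    Finsupp.weight (W w) (Finsupp.mapDomain Option.some a +
      Finsupp.single (none : Option (Fin n)) s) = wdot w a + s := by
  rw [map_add, weight_single_none, weight_mapDomain]

end HomFlatAux

namespace HomFlatAux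
variable (w : Fin n → ℤ)

/-- max weighted degree of a nonzero polynomial -/
noncomputable def Dz (f : MvPolynomial (Fin n) k) (hf : f.support.Nonempty) : ℤ :=
  f.support.sup' hf (wdot w)

lemma cast_sup_toNat (f : MvPolynomial (Fin n) k) (hf : f.support.Nonempty)
    {a : Fin n →₀ ℕ} (ha : a ∈ f.support) :
    ((f.support.sup fun b => (wdot w b - wdot w a).toNat : ℕ) : ℤ) = Dz w f hf - wdot w a := by
  rw [← Finset.sup'_eq_sup hf]
  rw [Finset.comp_sup'_eq_sup'_comp hf (Nat.cast : ℕ → ℤ) (fun p q => by simp [Nat.cast_max])]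
  have : (Nat.cast : ℕ → ℤ) ∘ (fun b => (wdot w b - wdot w a).toNat)
      = fun b => (wdot w b - wdot w a) ⊔ 0 := by
    funext b; simp [Function.comp, Int.toNat_eq_max]
  rw [this]
  show f.support.sup' hf ((fun x : ℤ => (x - wdot w a) ⊔ 0) ∘ wdot w) = _
  rw [← Finset.comp_sup'_eq_sup'_comp hf (fun x : ℤ => (x - wdot w a) ⊔ 0)
    (fun p q => by omega)]
  have h3 : wdot w a ≤ f.support.sup' hf (wdot w) := Finset.le_sup' (wdot w) ha
  rw [Dz]
  omega

end HomFlatAux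

namespace HomFlatAux
variable (w : Fin n → ℤ)

lemma whom_homog (f : MvPolynomial (Fin n) k) :
    SetLike.IsHomogeneousElem (weightedHomogeneousSubmodule k (W w)) (whomogenize w f) := by
  by_cases hf : f = 0
  · exact ⟨0, by simp [hf, whomogenize]⟩
  have hne : f.support.Nonempty := support_nonempty.mpr hf
  refine ⟨Dz w f hne, ?_⟩
  rw [whomogenize]
  apply Submodule.sum_mem
  intro a ha
  rw [mem_weightedHomogeneousSubmodule]
  apply isWeightedHomogeneous_monomial
  rw [weight_option, cast_sup_toNat w f hne ha]
  ring

/-- dehomogenization: t ↦ 1 -/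
noncomputable def deh : MvPolynomial (Option (Fin n)) k →ₐ[k] MvPolynomial (Fin n) k :=
  aeval (fun j => j.elim 1 X)

lemma deh_monomial (a : Fin n →₀ ℕ) (s : ℕ) (c : k) :
    deh (monomial (Finsupp.mapDomain Option.some a +
        Finsupp.single (none : Option (Fin n)) s) c) = monomial a c := by
  rw [deh, aeval_monomial, Finsupp.prod_add_index' (fun j => pow_zero _) (fun j e1 e2 => pow_add _ _ _)]
  rw [Finsupp.prod_mapDomain_index_inj (Option.some_injective _)]
  simp only [Option.elim, Finsupp.prod_single_index, pow_zero, one_pow, mul_one]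
  rw [monomial_eq, algebraMap_eq]

lemma deh_whom (f : MvPolynomial (Fin n) k) : deh (whomogenize w f) = f := by
  have h : deh (whomogenize w f) = ∑ a ∈ f.support, monomial a (coeff a f) := by
    rw [whomogenize, map_sum]
    exact Finset.sum_congr rfl fun a _ => deh_monomial a _ (coeff a f)
  rw [h]
  exact support_sum_monomial_coeff f

lemma deh_mem (I : Ideal (MvPolynomial (Fin n) k)) {x : MvPolynomial (Option (Fin n)) k}
    (hx : x ∈ homogenizedIdeal w I) : (deh x : MvPolynomial (Fin n) k) ∈ I := by
  have : homogenizedIdeal w I ≤ Ideal.comap (deh.toRingHom : MvPolynomial (Option (Fin n)) k →+* MvPolynomial (Fin n) k) I := by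
    rw [homogenizedIdeal, Ideal.span_le]
    rintro y ⟨f, hf, rfl⟩
    simp only [Ideal.mem_comap, SetLike.mem_coe, AlgHom.toRingHom_eq_coe, RingHom.coe_coe]
    rw [deh_whom]
    exact hf
  exact this hx

end HomFlatAux

namespace HomFlatAux
variable (w : Fin n → ℤ)

/-- restriction of an exponent to the Fin n part -/
noncomputable def pr (m : Option (Fin n) →₀ ℕ) : Fin n →₀ ℕ :=
  Finsupp.comapDomain Option.some m (Option.some_injective _).injOn

lemma pr_decomp (m : Option (Fin n) →₀ ℕ) :
    Finsupp.mapDomain Option.some (pr m) +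
      Finsupp.single (none : Option (Fin n)) (m none) = m := by
  ext j
  cases j with
  | none =>
      simp [Finsupp.mapDomain_notin_range, pr]
  | some i =>
      simp [Finsupp.mapDomain_apply (Option.some_injective _), pr]

lemma weight_eq_pr (m : Option (Fin n) →₀ ℕ) :
    Finsupp.weight (W w) m = wdot w (pr m) + m none := by
  conv_lhs => rw [← pr_decomp m]
  rw [weight_option]

end HomFlatAux

namespace HomFlatAux
variable (w : Fin n → ℤ)

lemma key_mem (I : Ideal (MvPolynomial (Fin n) k)) {g : MvPolynomial (Option (Fin n)) k} {d : ℤ}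
    (hg : g.IsWeightedHomogeneous (W w) d) (hd : deh g ∈ I) : g ∈ homogenizedIdeal w I := by
  by_cases hg0 : g = 0
  · simp [hg0]
  set f := (deh g : MvPolynomial (Fin n) k) with hf
  have hwm : ∀ m ∈ g.support, wdot w (pr m) + (m none : ℤ) = d := by
    intro m hm
    rw [← weight_eq_pr]
    exact hg (mem_support_iff.mp hm)
  have hfsum : f = ∑ m ∈ g.support, monomial (pr m) (coeff m g) := by
    conv_lhs => rw [hf]
    conv_lhs => rw [← support_sum_monomial_coeff g, map_sum]
    refine Finset.sum_congr rfl fun m hm => ?_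
    have h2 := deh_monomial (k := k) (pr m) (m none) (coeff m g)
    rw [pr_decomp m] at h2
    exact h2
  have hinj : ∀ m1 ∈ g.support, ∀ m2 ∈ g.support, pr m1 = pr m2 → m1 = m2 := by
    intro m1 h1 m2 h2 hpr
    have e1 := hwm m1 h1
    have e2 := hwm m2 h2
    rw [hpr] at e1
    have hnone : m1 none = m2 none := by omega
    conv_lhs => rw [← pr_decomp m1]
    conv_rhs => rw [← pr_decomp m2]
    rw [hpr, hnone]
  have hcoeff : ∀ m0 ∈ g.support, coeff (pr m0) f = coeff m0 g := by
    intro m0 h0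
    rw [hfsum, coeff_sum, Finset.sum_eq_single m0
      (fun m hm hne => by
        rw [coeff_monomial, if_neg (fun hEq => hne (hinj m hm m0 h0 hEq))])
      (fun h => absurd h0 h)]
    rw [coeff_monomial, if_pos rfl]
  have hsupp : f.support = g.support.image pr := by
    ext a
    simp only [Finset.mem_image]
    constructor
    · intro ha
      by_contra hcon
      push_neg at hcon
      rw [mem_support_iff] at ha
      apply ha
      rw [hfsum, coeff_sum]
      refine Finset.sum_eq_zero fun m hm => ?_
      rw [coeff_monomial, if_neg (hcon m hm)]
    · rintro ⟨m, hm, rfl⟩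
      rw [mem_support_iff, hcoeff m hm]
      exact mem_support_iff.mp hm
  have hfne : f.support.Nonempty := by
    rw [hsupp]
    exact (support_nonempty.mpr hg0).image pr
  have hDle : Dz w f hfne ≤ d := by
    apply Finset.sup'_le
    intro a ha
    rw [hsupp] at ha
    obtain ⟨m, hm, rfl⟩ := Finset.mem_image.mp ha
    have h1 := hwm m hm
    have h0 : (0:ℤ) ≤ (m none : ℤ) := Int.natCast_nonneg _
    omega
  set e : ℕ := (d - Dz w f hfne).toNat with he0
  have he : (e : ℤ) = d - Dz w f hfne := Int.toNat_of_nonneg (by omega)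
  have htrans : whomogenize w f = ∑ m ∈ g.support,
      monomial (Finsupp.mapDomain Option.some (pr m) +
        Finsupp.single (none : Option (Fin n))
          (f.support.sup fun b => (wdot w b - wdot w (pr m)).toNat))
        (coeff (pr m) f) := by
    rw [whomogenize]
    rw [Finset.sum_congr hsupp (fun _ _ => rfl)]
    exact Finset.sum_image hinj
  have hkey : g = (X (none : Option (Fin n)) : MvPolynomial (Option (Fin n)) k) ^ e
      * whomogenize w f := by
    rw [htrans, Finset.mul_sum]
    conv_lhs => rw [← support_sum_monomial_coeff g]
    refine Finset.sum_congr rfl fun m hm => ?_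
    rw [X_pow_eq_monomial, monomial_mul, one_mul, hcoeff m hm]
    congr 1
    have hs := cast_sup_toNat w f hfne
      (a := pr m) (by rw [hsupp]; exact Finset.mem_image_of_mem pr hm)
    have hc := hwm m hm
    have hnat : m none = e + (f.support.sup fun b => (wdot w b - wdot w (pr m)).toNat) := by
      omega
    conv_lhs => rw [← pr_decomp m]
    rw [hnat, Finsupp.single_add, add_left_comm]
  rw [hkey]
  exact Ideal.mul_mem_left _ _ (Ideal.subset_span ⟨f, hd, rfl⟩)

end HomFlatAux

namespace HomFlatAux
variable (w : Fin n → ℤ)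

lemma comp_monomial (N : ℤ) (u : Option (Fin n) →₀ ℕ) (c : k) :
    weightedHomogeneousComponent (W w) N (monomial u c) =
      if Finsupp.weight (W w) u = N then monomial u c else 0 := by
  ext m
  rw [coeff_weightedHomogeneousComponent]
  by_cases hmu : u = m
  · subst hmu
    split_ifs <;> simp_all [coeff_monomial]
  · split_ifs <;> simp [coeff_monomial, hmu]

lemma comp_mem_J (I : Ideal (MvPolynomial (Fin n) k)) {x : MvPolynomial (Option (Fin n)) k}
    (hx : x ∈ homogenizedIdeal w I) (N : ℤ) :
    weightedHomogeneousComponent (W w) N x ∈ homogenizedIdeal w I := by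
  letI : GradedAlgebra (weightedHomogeneousSubmodule k (W w)) := weightedGradedAlgebra k (W w)
  have hhom : (homogenizedIdeal w I).IsHomogeneous (weightedHomogeneousSubmodule k (W w)) := by
    apply Ideal.homogeneous_span
    rintro y ⟨f, hf, rfl⟩
    exact whom_homog w f
  have h1 := hhom N hx
  have heq : ((DirectSum.decompose (weightedHomogeneousSubmodule k (W w)) x N :
      weightedHomogeneousSubmodule k (W w) N) : MvPolynomial (Option (Fin n)) k) =
      weightedHomogeneousComponent (W w) N x :=
    weightedDecomposition.decompose'_apply k (W w) x N
  rwa [heq] at h1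

end HomFlatAux

namespace HomFlatAux
variable (w : Fin n → ℤ)

lemma main_step (I : Ideal (MvPolynomial (Fin n) k)) (p : Polynomial k) (hp : p ≠ 0) :
    ∀ (N : ℕ) (g : MvPolynomial (Option (Fin n)) k), g.support.card = N →
      Polynomial.aeval (X (none : Option (Fin n)) : MvPolynomial (Option (Fin n)) k) p * g
        ∈ homogenizedIdeal w I → g ∈ homogenizedIdeal w I := by
  intro N
  induction N using Nat.strong_induction_on with
  | _ N IH =>
    intro g hcard hPg
    by_cases hg0 : g = 0
    · simp [hg0]
    have hne : g.support.Nonempty := support_nonempty.mpr hg0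
    set D : ℤ := g.support.sup' hne (Finsupp.weight (W w)) with hD
    set j0 := p.natDegree with hj0
    set c := p.leadingCoeff with hcdef
    have hc : c ≠ 0 := Polynomial.leadingCoeff_ne_zero.mpr hp
    set gD := weightedHomogeneousComponent (W w) D g with hgD
    set P := Polynomial.aeval (X (none : Option (Fin n)) : MvPolynomial (Option (Fin n)) k) p
      with hP
    have hPsum : P = ∑ j ∈ p.support,
        monomial (Finsupp.single (none : Option (Fin n)) j) (p.coeff j) := by
      rw [hP, Polynomial.aeval_def, Polynomial.eval₂_eq_sum, Polynomial.sum]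
      refine Finset.sum_congr rfl fun j _ => ?_
      rw [X_pow_eq_monomial, algebraMap_eq, C_mul_monomial, mul_one]
    have hgDsum : gD = ∑ m ∈ g.support,
        if Finsupp.weight (W w) m = D then monomial m (coeff m g) else 0 := by
      conv_lhs => rw [hgD, ← support_sum_monomial_coeff g, map_sum]
      exact Finset.sum_congr rfl fun m _ => comp_monomial w D m (coeff m g)
    have claim1 : weightedHomogeneousComponent (W w) (D + j0) (P * g) =
        monomial (Finsupp.single (none : Option (Fin n)) j0) c * gD := by
      conv_lhs => rw [hPsum, ← support_sum_monomial_coeff g, Finset.sum_mul_sum, map_sum]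
      have hterm : ∀ j ∈ p.support, ∀ m ∈ g.support,
          weightedHomogeneousComponent (W w) (D + j0)
            (monomial (Finsupp.single (none : Option (Fin n)) j) (p.coeff j) *
              monomial m (coeff m g)) =
          if j = j0 then (if Finsupp.weight (W w) m = D then
            monomial (Finsupp.single (none : Option (Fin n)) j0 + m) (c * coeff m g) else 0)
            else 0 := by
        intro j hj m hm
        rw [monomial_mul, comp_monomial]
        have hw : Finsupp.weight (W w) (Finsupp.single (none : Option (Fin n)) j + m) =
            (j : ℤ) + Finsupp.weight (W w) m := by
          rw [map_add, weight_single_none]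
        have hjle : j ≤ j0 := Polynomial.le_natDegree_of_mem_supp j hj
        have hmle : Finsupp.weight (W w) m ≤ D := Finset.le_sup' _ hm
        rw [hw]
        by_cases hcase : j = j0 ∧ Finsupp.weight (W w) m = D
        · obtain ⟨rfl, h2⟩ := hcase
          rw [if_pos (by omega), if_pos rfl, if_pos h2, hcdef, Polynomial.leadingCoeff]
        · rw [if_neg (fun hEq => hcase (by constructor <;> omega))]
          by_cases h1 : j = j0
          · subst h1
            rw [if_pos rfl, if_neg (fun h2 => hcase ⟨rfl, h2⟩)]
          · rw [if_neg h1]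
      have hsum2 : ∀ j ∈ p.support,
          weightedHomogeneousComponent (W w) (D + j0)
            (∑ m ∈ g.support, monomial (Finsupp.single (none : Option (Fin n)) j) (p.coeff j) *
              monomial m (coeff m g)) =
          if j = j0 then (∑ m ∈ g.support, if Finsupp.weight (W w) m = D then
            monomial (Finsupp.single (none : Option (Fin n)) j0 + m) (c * coeff m g) else 0)
            else 0 := by
        intro j hj
        rw [map_sum, Finset.sum_congr rfl (fun m hm => hterm j hj m hm)]
        by_cases h1 : j = j0 <;> simp [h1]
      rw [Finset.sum_congr rfl hsum2, Finset.sum_ite_eq' p.support j0]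
      rw [if_pos (Polynomial.natDegree_mem_support_of_nonzero hp)]
      rw [hgDsum, Finset.mul_sum]
      refine Finset.sum_congr rfl fun m hm => ?_
      rw [mul_ite, mul_zero, monomial_mul]
    have hPgD : monomial (Finsupp.single (none : Option (Fin n)) j0) c * gD
        ∈ homogenizedIdeal w I := claim1 ▸ comp_mem_J w I hPg (D + j0)
    have hgDJ : gD ∈ homogenizedIdeal w I := by
      have h2 : deh (monomial (Finsupp.single (none : Option (Fin n)) j0) c * gD) ∈ I :=
        deh_mem w I hPgD
      rw [map_mul] at h2
      have h3 : deh (monomial (Finsupp.single (none : Option (Fin n)) j0) c) = C c := by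
        have h4 := deh_monomial (k := k) (0 : Fin n →₀ ℕ) j0 c
        simpa using h4
      rw [h3] at h2
      have h4 : deh gD ∈ I := by
        have h5 := I.mul_mem_left (C c⁻¹) h2
        rwa [← mul_assoc, ← C_mul, inv_mul_cancel₀ hc, C_1, one_mul] at h5
      exact key_mem w I (mem_weightedHomogeneousSubmodule _ _ _ _ |>.mp
        (weightedHomogeneousComponent_mem (W w) g D)) h4
    have hsub : P * (g - gD) ∈ homogenizedIdeal w I := by
      have heq : P * (g - gD) = P * g - P * gD := by ring
      rw [heq]
      exact Ideal.sub_mem _ hPg (Ideal.mul_mem_left _ _ hgDJ)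
    obtain ⟨m0, hm0, hm0D⟩ := Finset.exists_mem_eq_sup' hne (Finsupp.weight (W w))
    have hsubset : (g - gD).support ⊆ g.support := by
      intro m hm
      rw [mem_support_iff] at hm ⊢
      intro h
      apply hm
      rw [coeff_sub, hgD, coeff_weightedHomogeneousComponent]
      split_ifs <;> simp [h]
    have hnotmem : m0 ∉ (g - gD).support := by
      rw [mem_support_iff]
      intro hcon
      apply hcon
      rw [coeff_sub, hgD, coeff_weightedHomogeneousComponent, if_pos hm0D.symm, sub_self]
    have hlt : (g - gD).support.card < N := by
      rw [← hcard]
      exact Finset.card_lt_card ((Finset.ssubset_iff_of_subset hsubset).mpr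
        ⟨m0, hm0, hnotmem⟩)
    have hIH := IH _ hlt (g - gD) rfl hsub
    have hfin : g = (g - gD) + gD := by ring
    rw [hfin]
    exact Ideal.add_mem _ hIH hgDJ

end HomFlatAux

set_option maxHeartbeats 1000000 in
set_option synthInstance.maxHeartbeats 400000 in
/-- For w ∈ ℤ^n and an ideal I of k[X], the ring k[X,t]/I^hom is a flat
k[t]-module, where k[t] acts via t ↦ class of t. -/
theorem homogenization_flat (n : ℕ) (k : Type*) [Field k] (w : Fin n → ℤ)
    (I : Ideal (MvPolynomial (Fin n) k)) :
    letI : Algebra (Polynomial k) (MvPolynomial (Option (Fin n)) k ⧸ homogenizedIdeal w I) :=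
      RingHom.toAlgebra ((Ideal.Quotient.mk (homogenizedIdeal w I)).comp
        (Polynomial.aeval (X (none : Option (Fin n)) :
          MvPolynomial (Option (Fin n)) k)).toRingHom)
    Module.Flat (Polynomial k) (MvPolynomial (Option (Fin n)) k ⧸ homogenizedIdeal w I) := by
  letI : Algebra (Polynomial k) (MvPolynomial (Option (Fin n)) k ⧸ homogenizedIdeal w I) :=
    RingHom.toAlgebra ((Ideal.Quotient.mk (homogenizedIdeal w I)).comp
      (Polynomial.aeval (X (none : Option (Fin n)) :
        MvPolynomial (Option (Fin n)) k)).toRingHom)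
  rw [Module.Flat.iff_rTensor_injective']
  intro Iq
  obtain ⟨q, hq⟩ := (IsPrincipalIdealRing.principal Iq).principal
  rcases eq_or_ne q 0 with hq0 | hq0
  · have hz : ∀ z : TensorProduct (Polynomial k) Iq
        (MvPolynomial (Option (Fin n)) k ⧸ homogenizedIdeal w I), z = 0 := by
      intro z
      induction z using TensorProduct.induction_on with
      | zero => rfl
      | tmul a m =>
          obtain ⟨a, ha⟩ := a
          have ha2 : a ∈ Submodule.span (Polynomial k) ({q} : Set (Polynomial k)) := hq ▸ ha
          have ha0 : a = 0 := by
            rw [hq0] at ha2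
            obtain ⟨r, hr⟩ := Submodule.mem_span_singleton.mp ha2
            simp only [smul_zero] at hr
            exact hr.symm
          have hz2 : (⟨a, ha⟩ : Iq) = 0 := Subtype.ext ha0
          rw [hz2, TensorProduct.zero_tmul]
      | add x y hx hy => rw [hx, hy, add_zero]
    intro x y _
    rw [hz x, hz y]
  · -- q-regularity on the quotient
    have hinjq : ∀ x y : MvPolynomial (Option (Fin n)) k ⧸ homogenizedIdeal w I,
        q • x = q • y → x = y := by
      intro x y hxy
      obtain ⟨gx, rfl⟩ := Ideal.Quotient.mk_surjective x
      obtain ⟨gy, rfl⟩ := Ideal.Quotient.mk_surjective y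
      have hsmul : ∀ g : MvPolynomial (Option (Fin n)) k,
          q • (Ideal.Quotient.mk (homogenizedIdeal w I) g) =
            Ideal.Quotient.mk (homogenizedIdeal w I)
              (Polynomial.aeval (X (none : Option (Fin n)) :
                MvPolynomial (Option (Fin n)) k) q * g) := by
        intro g
        rw [Algebra.smul_def, RingHom.algebraMap_toAlgebra]
        rfl
      rw [hsmul, hsmul] at hxy
      have h1 := Ideal.Quotient.eq.mp hxy
      have h2 : Polynomial.aeval (X (none : Option (Fin n)) :
          MvPolynomial (Option (Fin n)) k) q * (gx - gy) ∈ homogenizedIdeal w I := by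
        rw [mul_sub]; exact h1
      exact Ideal.Quotient.eq.mpr (HomFlatAux.main_step w I q hq0 _ (gx - gy) rfl h2)
    have hmemq : q ∈ Iq := by
      rw [hq]; exact Submodule.mem_span_singleton_self q
    set qel : Iq := ⟨q, hmemq⟩ with hqel
    have hsurj : ∀ z : TensorProduct (Polynomial k) Iq
        (MvPolynomial (Option (Fin n)) k ⧸ homogenizedIdeal w I),
        ∃ m, z = qel ⊗ₜ[Polynomial k] m := by
      intro z
      induction z using TensorProduct.induction_on with
      | zero => exact ⟨0, (TensorProduct.tmul_zero _ _).symm⟩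
      | tmul a m =>
          obtain ⟨a, ha⟩ := a
          have ha2 : a ∈ Submodule.span (Polynomial k) ({q} : Set (Polynomial k)) := hq ▸ ha
          obtain ⟨r, hr⟩ := Submodule.mem_span_singleton.mp ha2
          refine ⟨r • m, ?_⟩
          have hz2 : (⟨a, ha⟩ : Iq) = r • qel := Subtype.ext (by
            simp only [hqel, Submodule.coe_smul, smul_eq_mul, ← hr])
          rw [hz2, TensorProduct.smul_tmul]
      | add x y hx hy =>
          obtain ⟨mx, rfl⟩ := hx
          obtain ⟨my, rfl⟩ := hy
          exact ⟨mx + my, (TensorProduct.tmul_add _ _ _).symm⟩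
    intro x y hxy
    obtain ⟨mx, rfl⟩ := hsurj x
    obtain ⟨my, rfl⟩ := hsurj y
    have happ : ∀ m : MvPolynomial (Option (Fin n)) k ⧸ homogenizedIdeal w I,
        (TensorProduct.lid (Polynomial k) _)
          (LinearMap.rTensor _ Iq.subtype (qel ⊗ₜ[Polynomial k] m)) = q • m := by
      intro m
      rw [LinearMap.rTensor_tmul]
      simp [TensorProduct.lid_tmul]
      rfl
    have h3 := congrArg (TensorProduct.lid (Polynomial k) _) hxy
    rw [happ, happ] at h3
    rw [hinjq _ _ h3]
end
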